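/- Let T ≥ 1 and define G_T : ℝ^T → ℝ by G_T(x) = Ψ(1)Λ(x₁) + Σ_{i=2}^T [Ψ(−x_{i−1})Λ(−x_i) + Ψ(x_{i−1})Λ(x_i)], where Ψ(x) = exp(1 − 1/(2x − 1)²) for x > 1/2 and Ψ(x) = 0 for x ≤ 1/2, and Λ(x) = 8(e^{−x²/2} − 1). Then G_T(0) = 0 and G_T(x) ≥ −40·T for all x ∈ ℝ^T; in particular G_T(0) − inf_{x∈ℝ^T} G_T(x) ≤ 40·T. -/

import Mathlib

/-!
Since `Λ ≥ -8` and `0 ≤ Ψ ≤ e`, and `Ψ` vanishes on `(-∞, 1/2]` so that at most one of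
`Ψ(-a)`, `Ψ(a)` is nonzero, every summand of `G_T` is at least `-8e > -40`;
and `Λ(0) = 0` gives `G_T(0) = 0`.
-/

/-- The bump-like component function `Ψ` of the hard-instance construction. -/
noncomputable def Psi (x : ℝ) : ℝ :=
  if 1 / 2 < x then Real.exp (1 - 1 / (2 * x - 1) ^ 2) else 0

/-- The component function `Λ` of the hard-instance construction. -/
noncomputable def Lam (x : ℝ) : ℝ := 8 * (Real.exp (-x ^ 2 / 2) - 1)

/-- The hard instance `G_T(x) = Ψ(1)Λ(x₁) + ∑_{i=2}^T [Ψ(-x_{i-1})Λ(-x_i) + Ψ(x_{i-1})Λ(x_i)]`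
(coordinates are `0`-indexed in Lean: mathematical `x_i` is Lean's `x ⟨i-1, _⟩`). -/
noncomputable def G (T : ℕ) (x : EuclideanSpace ℝ (Fin T)) : ℝ :=
  ∑ i : Fin T,
    if (i : ℕ) = 0 then Psi 1 * Lam (x i)
    else
      Psi (-(x ⟨(i : ℕ) - 1, Nat.lt_of_le_of_lt (Nat.sub_le _ _) i.isLt⟩)) * Lam (-(x i)) +
        Psi (x ⟨(i : ℕ) - 1, Nat.lt_of_le_of_lt (Nat.sub_le _ _) i.isLt⟩) * Lam (x i)

open Real

lemma Psi_nonneg (x : ℝ) : 0 ≤ Psi x := by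
  unfold Psi
  split_ifs
  exacts [(exp_pos _).le, le_rfl]

lemma Psi_le_exp_one (x : ℝ) : Psi x ≤ exp 1 := by
  unfold Psi
  split_ifs
  · exact exp_le_exp.mpr (by linarith [one_div_nonneg.mpr (sq_nonneg (2 * x - 1))])
  · exact (exp_pos 1).le

lemma Psi_eq_zero_of_le {x : ℝ} (hx : x ≤ 1 / 2) : Psi x = 0 :=
  if_neg hx.not_gt

lemma Psi_neg_add_Psi_le_exp_one (a : ℝ) : Psi (-a) + Psi a ≤ exp 1 := by
  rcases le_or_gt a (1 / 2) with ha | ha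
  · rw [Psi_eq_zero_of_le ha, add_zero]
    exact Psi_le_exp_one _
  · rw [Psi_eq_zero_of_le (by linarith : -a ≤ 1 / 2), zero_add]
    exact Psi_le_exp_one _

lemma neg_eight_le_Lam (x : ℝ) : -8 ≤ Lam x := by
  unfold Lam
  linarith [exp_pos (-x ^ 2 / 2)]

lemma Lam_zero : Lam 0 = 0 := by simp [Lam]

lemma neg_eight_mul_Psi_le_Psi_mul_Lam (a b : ℝ) : -8 * Psi a ≤ Psi a * Lam b := by
  nlinarith [Psi_nonneg a, neg_eight_le_Lam b]

lemma neg_eight_mul_exp_one_le_Psi_mul_Lam_add (a b : ℝ) :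
    -8 * exp 1 ≤ Psi (-a) * Lam (-b) + Psi a * Lam b := by
  linarith [neg_eight_mul_Psi_le_Psi_mul_Lam (-a) (-b), neg_eight_mul_Psi_le_Psi_mul_Lam a b,
    Psi_neg_add_Psi_le_exp_one a]

lemma G_zero (T : ℕ) : G T 0 = 0 := by
  simp [G, Lam_zero]

lemma neg_eight_mul_exp_one_mul_le_G (T : ℕ) (x : EuclideanSpace ℝ (Fin T)) :
    -8 * exp 1 * T ≤ G T x :=
  calc -8 * exp 1 * T = ∑ _i : Fin T, -8 * exp 1 := by simp [mul_comm]
    _ ≤ G T x := Finset.sum_le_sum fun i _ => by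
      split_ifs
      · linarith [neg_eight_mul_Psi_le_Psi_mul_Lam 1 (x i), Psi_le_exp_one 1]
      · exact neg_eight_mul_exp_one_le_Psi_mul_Lam_add _ _

theorem stmt_12_general (T : ℕ) :
    G T 0 = 0 ∧
    (∀ x : EuclideanSpace ℝ (Fin T), G T x ≥ -40 * T) ∧
    G T 0 - ⨅ x : EuclideanSpace ℝ (Fin T), G T x ≤ 40 * T := by
  have h40 : -40 * (T : ℝ) ≤ -8 * exp 1 * T := by
    gcongr
    linarith [exp_one_lt_d9]
  have hG : ∀ x : EuclideanSpace ℝ (Fin T), G T x ≥ -40 * T := fun x =>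
    h40.trans (neg_eight_mul_exp_one_mul_le_G T x)
  refine ⟨G_zero T, hG, ?_⟩
  rw [G_zero]
  linarith [le_ciInf hG]

/-- `G_T(0) = 0`, `G_T(x) ≥ -40T` for all `x`, and consequently
`G_T(0) - inf_x G_T(x) ≤ 40T`. -/
theorem stmt_12 (T : ℕ) (hT : 1 ≤ T) :
    G T 0 = 0 ∧
    (∀ x : EuclideanSpace ℝ (Fin T), G T x ≥ -40 * T) ∧
    G T 0 - ⨅ x : EuclideanSpace ℝ (Fin T), G T x ≤ 40 * T :=
  stmt_12_general T
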